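/- If θ₁, θ₂ ∈ Θ satisfy ‖θ₁ − θ₂‖₂ ≤ ρ t_{θ₁} for some ρ ≥ 0, then (1 − √(ρ² + 4ρ))₊ · t_{θ₁} ≤ t_{θ₂} ≤ (1 + √(ρ² + 4ρ)) · t_{θ₁}. -/

import Mathlib

/-! For fixed `z`, the supremum defining `m_θ(t)` is concave in `t` (`Θ` and `f` are convex and the
constraint ball grows linearly in `t`), hence so is `m_θ`. Moving the centre from `θ` to `θ'` costs
at most a radius `d = ‖θ - θ'‖`, i.e. `m_θ(t) ≤ m_θ'(t + d)`, because the linear term `⟪z, θ - θ'⟫`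
has Gaussian mean zero. Concavity and optimality of `t_θ` for `m_θ(t) - t²/2` make `t_θ` a
supergradient: `m_θ(u) ≤ m_θ(t_θ) + t_θ (u - t_θ)` for `u ≥ t_θ`. If `t_θ' ≥ t_θ + d`, combining this
with the optimality of `t_θ'` against `t_θ + d` gives `(t_θ' - t_θ)² ≤ d² + 4 t_θ d`; the bounds then
follow from `d ≤ ρ t_θ₁`. -/

open MeasureTheory ProbabilityTheory Real Set

noncomputable def stdGaussian (n : ℕ) : Measure (EuclideanSpace ℝ (Fin n)) :=
  Measure.map (⇑(EuclideanSpace.equiv (Fin n) ℝ).symm) (Measure.pi fun _ => gaussianReal 0 1)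

noncomputable def mfun (n : ℕ) (Θ : Set (EuclideanSpace ℝ (Fin n)))
    (f : EuclideanSpace ℝ (Fin n) → ℝ) (θ : EuclideanSpace ℝ (Fin n)) (t : ℝ) : ℝ :=
  ∫ z, sSup ((fun α => (inner ℝ z (α - θ) : ℝ) - f α) '' {α ∈ Θ | ‖α - θ‖ ≤ t}) ∂(stdGaussian n)

open Filter Topology
open scoped RealInnerProductSpace

theorem stdGaussian_eq_stdGaussian_euclideanSpace (n : ℕ) :
    _root_.stdGaussian n = ProbabilityTheory.stdGaussian (EuclideanSpace ℝ (Fin n)) :=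
  map_pi_eq_stdGaussian

section Gaussian

variable {E : Type*} [NormedAddCommGroup E] [InnerProductSpace ℝ E] [FiniteDimensional ℝ E]
  [MeasurableSpace E] [BorelSpace E]

theorem integrable_inner_stdGaussian (v : E) :
    Integrable (fun z => ⟪z, v⟫) (ProbabilityTheory.stdGaussian E) := by
  simpa [real_inner_comm] using
    IsGaussian.integrable_dual (ProbabilityTheory.stdGaussian E) (innerSL ℝ v)

theorem integral_inner_stdGaussian (v : E) :
    ∫ z, ⟪z, v⟫ ∂(ProbabilityTheory.stdGaussian E) = 0 := by
  simpa [real_inner_comm] using integral_strongDual_stdGaussian (innerSL ℝ v)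

end Gaussian

theorem concaveOn_integral {α E : Type*} [MeasurableSpace α] {μ : Measure α}
    [AddCommGroup E] [Module ℝ E] {s : Set E} {F : E → α → ℝ} (hs : Convex ℝ s)
    (hF : ∀ᵐ z ∂μ, ConcaveOn ℝ s (F · z)) (hint : ∀ x ∈ s, Integrable (F x) μ) :
    ConcaveOn ℝ s (fun x => ∫ z, F x z ∂μ) := by
  refine ⟨hs, fun x hx y hy a b ha hb hab => ?_⟩
  simp only [smul_eq_mul]
  rw [← integral_const_mul, ← integral_const_mul,
    ← integral_add ((hint x hx).const_mul a) ((hint y hy).const_mul b)]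
  exact integral_mono_ae (((hint x hx).const_mul a).add ((hint y hy).const_mul b))
    (hint _ (hs hx hy ha hb hab)) (hF.mono fun z hz => hz.2 hx hy ha hb hab)

theorem ConcaveOn.le_add_mul_sub_of_isMaxOn {φ : ℝ → ℝ} (hφ : ConcaveOn ℝ (Ici 0) φ)
    {t u : ℝ} (ht : 0 ≤ t) (hmax : IsMaxOn (fun s => φ s - s ^ 2 / 2) (Ici 0) t) (htu : t ≤ u) :
    φ u ≤ φ t + t * (u - t) := by
  have hstep : ∀ l ∈ Ioc (0 : ℝ) 1, φ u - φ t - t * (u - t) ≤ l * ((u - t) ^ 2 / 2) := by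
    rintro l ⟨hl0, hl1⟩
    have hconc := hφ.2 (show t ∈ Ici 0 from ht) (show u ∈ Ici 0 from ht.trans htu)
      (sub_nonneg.2 hl1) hl0.le (sub_add_cancel 1 l)
    have hopt : φ (t + l * (u - t)) - (t + l * (u - t)) ^ 2 / 2 ≤ φ t - t ^ 2 / 2 :=
      hmax (show t + l * (u - t) ∈ Ici 0 by
        simp only [mem_Ici]; nlinarith [mul_nonneg hl0.le (sub_nonneg.2 htu)])
    simp only [smul_eq_mul, show (1 - l) * t + l * u = t + l * (u - t) by ring] at hconc
    have : l * (φ u - φ t - t * (u - t)) ≤ l * (l * ((u - t) ^ 2 / 2)) := by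
      linear_combination hconc + hopt
    exact le_of_mul_le_mul_left this hl0
  have hlim : Tendsto (fun l : ℝ => l * ((u - t) ^ 2 / 2)) (𝓝[>] 0) (𝓝 0) := by
    simpa using (tendsto_id.mono_left (nhdsWithin_le_nhds (a := (0 : ℝ)))).mul_const
      ((u - t) ^ 2 / 2)
  linarith [ge_of_tendsto hlim (eventually_of_mem (Ioc_mem_nhdsGT one_pos) hstep)]

theorem le_add_sqrt_of_isMaxOn {φ ψ : ℝ → ℝ} (hφ : ConcaveOn ℝ (Ici 0) φ) {t t' d : ℝ}
    (ht : 0 ≤ t) (hd : 0 ≤ d) (hmax : IsMaxOn (fun s => φ s - s ^ 2 / 2) (Ici 0) t)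
    (hmax' : IsMaxOn (fun s => ψ s - s ^ 2 / 2) (Ici 0) t')
    (hφψ : φ t ≤ ψ (t + d)) (hψφ : ψ t' ≤ φ (t' + d)) :
    t' ≤ t + √(d ^ 2 + 4 * t * d) := by
  rcases le_or_gt t' (t + d) with hle | hlt
  · have : d ≤ √(d ^ 2 + 4 * t * d) :=
      Real.le_sqrt_of_sq_le (by nlinarith [mul_nonneg ht hd])
    linarith
  · have hopt' : ψ (t + d) - (t + d) ^ 2 / 2 ≤ ψ t' - t' ^ 2 / 2 :=
      hmax' (show t + d ∈ Ici 0 from add_nonneg ht hd)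
    have hslope : φ (t' + d) ≤ φ t + t * (t' + d - t) :=
      hφ.le_add_mul_sub_of_isMaxOn ht hmax (by linarith)
    have : (t' - t) ^ 2 ≤ d ^ 2 + 4 * t * d := by
      linear_combination 2 * (hopt' + hψφ + hφψ + hslope)
    linarith [Real.le_sqrt_of_sq_le this]

theorem sqrt_sq_add_four_mul_le {d t T ρ : ℝ} (hρ : 0 ≤ ρ) (hd0 : 0 ≤ d) (ht : 0 ≤ t)
    (htT : t ≤ T) (hd : d ≤ ρ * T) :
    √(d ^ 2 + 4 * t * d) ≤ √(ρ ^ 2 + 4 * ρ) * T := by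
  rw [← Real.sqrt_sq (ht.trans htT), ← Real.sqrt_mul (by nlinarith)]
  have hρT : 0 ≤ ρ * T := mul_nonneg hρ (ht.trans htT)
  exact Real.sqrt_le_sqrt (by nlinarith [mul_le_mul hd htT ht hρT, mul_le_mul hd hd hd0 hρT])

section LocalSup

variable {E : Type*} [NormedAddCommGroup E] [InnerProductSpace ℝ E] {Θ : Set E} {f : E → ℝ}
  {θ θ' z : E} {t : ℝ}

noncomputable def localSup (Θ : Set E) (f : E → ℝ) (θ : E) (t : ℝ) (z : E) : ℝ :=
  sSup ((fun α => ⟪z, α - θ⟫ - f α) '' {α ∈ Θ | ‖α - θ‖ ≤ t})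

theorem le_localSup (hbdd : BddBelow (f '' Θ)) {α : E} (hα : α ∈ Θ) (hαt : ‖α - θ‖ ≤ t) :
    ⟪z, α - θ⟫ - f α ≤ localSup Θ f θ t z := by
  obtain ⟨B, hB⟩ := hbdd
  refine le_csSup ⟨‖z‖ * t - B, ?_⟩ ⟨α, ⟨hα, hαt⟩, rfl⟩
  rintro _ ⟨β, ⟨hβ, hβt⟩, rfl⟩
  have hinner : ⟪z, β - θ⟫ ≤ ‖z‖ * t :=
    (real_inner_le_norm _ _).trans (mul_le_mul_of_nonneg_left hβt (norm_nonneg z))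
  linarith [hB ⟨β, hβ, rfl⟩]

theorem localSup_le (hθ : θ ∈ Θ) (ht : 0 ≤ t) {c : ℝ}
    (h : ∀ α ∈ Θ, ‖α - θ‖ ≤ t → ⟪z, α - θ⟫ - f α ≤ c) : localSup Θ f θ t z ≤ c :=
  csSup_le ⟨_, θ, ⟨hθ, by simpa using ht⟩, rfl⟩ (by rintro _ ⟨α, ⟨hα, hαt⟩, rfl⟩; exact h α hα hαt)

theorem localSup_add_inner_le (hbdd : BddBelow (f '' Θ)) (hθ : θ ∈ Θ) (ht : 0 ≤ t) :
    localSup Θ f θ t z + ⟪z, θ - θ'⟫ ≤ localSup Θ f θ' (t + ‖θ - θ'‖) z := by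
  rw [← le_sub_iff_add_le]
  refine localSup_le hθ ht fun α hα hαt => ?_
  have hsplit : α - θ' = (α - θ) + (θ - θ') := by abel
  have hαt' : ‖α - θ'‖ ≤ t + ‖θ - θ'‖ := by
    rw [hsplit]; exact (norm_add_le _ _).trans (by linarith)
  have := le_localSup (z := z) hbdd hα hαt'
  rw [hsplit, inner_add_right] at this
  linarith

theorem concaveOn_localSup (hconv : Convex ℝ Θ) (hf : ConvexOn ℝ Θ f)
    (hbdd : BddBelow (f '' Θ)) (hθ : θ ∈ Θ) (z : E) :
    ConcaveOn ℝ (Ici 0) (fun t => localSup Θ f θ t z) := by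
  refine concaveOn_iff_forall_pos.2 ⟨convex_Ici 0, fun a ha b hb p q hp hq hpq => ?_⟩
  simp only [smul_eq_mul]
  have hpair : ∀ α ∈ Θ, ‖α - θ‖ ≤ a → ∀ β ∈ Θ, ‖β - θ‖ ≤ b →
      p * (⟪z, α - θ⟫ - f α) + q * (⟪z, β - θ⟫ - f β) ≤ localSup Θ f θ (p * a + q * b) z := by
    intro α hα hαa β hβ hβb
    have hdiff : p • α + q • β - θ = p • (α - θ) + q • (β - θ) := by
      rw [smul_sub, smul_sub, sub_add_sub_comm, ← add_smul, hpq, one_smul]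
    have hnorm : ‖p • α + q • β - θ‖ ≤ p * a + q * b := by
      rw [hdiff]
      refine (norm_add_le _ _).trans ?_
      rw [norm_smul_of_nonneg hp.le, norm_smul_of_nonneg hq.le]
      gcongr
    have hle := le_localSup (z := z) hbdd (hconv hα hβ hp.le hq.le hpq) hnorm
    rw [hdiff, inner_add_right, real_inner_smul_right, real_inner_smul_right] at hle
    have hfle := hf.2 hα hβ hp.le hq.le hpq
    simp only [smul_eq_mul] at hfle
    linarith
  rw [← le_sub_iff_add_le, ← le_div_iff₀' hp]
  refine localSup_le hθ ha fun α hα hαa => ?_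
  rw [le_div_iff₀' hp, le_sub_comm, ← le_div_iff₀' hq]
  refine localSup_le hθ hb fun β hβ hβb => ?_
  rw [le_div_iff₀' hq, le_sub_iff_add_le']
  exact hpair α hα hαa β hβ hβb

end LocalSup

section Mfun

variable {n : ℕ} {Θ : Set (EuclideanSpace ℝ (Fin n))} {f : EuclideanSpace ℝ (Fin n) → ℝ}
  {θ θ' : EuclideanSpace ℝ (Fin n)}

theorem mfun_eq_integral_localSup {t : ℝ} :
    mfun n Θ f θ t =
      ∫ z, localSup Θ f θ t z ∂(ProbabilityTheory.stdGaussian (EuclideanSpace ℝ (Fin n))) := by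
  rw [mfun, stdGaussian_eq_stdGaussian_euclideanSpace]
  rfl

theorem mfun_le_mfun_add_norm_sub (hbdd : BddBelow (f '' Θ)) (hθ : θ ∈ Θ) {t : ℝ} (ht : 0 ≤ t)
    (hint : Integrable (localSup Θ f θ t) (_root_.stdGaussian n))
    (hint' : Integrable (localSup Θ f θ' (t + ‖θ - θ'‖)) (_root_.stdGaussian n)) :
    mfun n Θ f θ t ≤ mfun n Θ f θ' (t + ‖θ - θ'‖) := by
  rw [stdGaussian_eq_stdGaussian_euclideanSpace] at hint hint'
  have hinner := integrable_inner_stdGaussian (θ - θ')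
  rw [mfun_eq_integral_localSup, mfun_eq_integral_localSup]
  calc ∫ z, localSup Θ f θ t z ∂(ProbabilityTheory.stdGaussian _)
      = ∫ z, localSup Θ f θ t z + ⟪z, θ - θ'⟫ ∂(ProbabilityTheory.stdGaussian _) := by
        rw [integral_add hint hinner, integral_inner_stdGaussian, add_zero]
    _ ≤ _ := integral_mono (hint.add hinner) hint' fun z => localSup_add_inner_le hbdd hθ ht

theorem concaveOn_mfun (hconv : Convex ℝ Θ) (hf : ConvexOn ℝ Θ f) (hbdd : BddBelow (f '' Θ))
    (hθ : θ ∈ Θ) (hint : ∀ t ∈ Ici (0 : ℝ), Integrable (localSup Θ f θ t) (_root_.stdGaussian n)) :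
    ConcaveOn ℝ (Ici 0) (mfun n Θ f θ) :=
  concaveOn_integral (convex_Ici 0) (ae_of_all _ (concaveOn_localSup hconv hf hbdd hθ)) hint

end Mfun

theorem stmt10_general (n : ℕ) (Θ : Set (EuclideanSpace ℝ (Fin n)))
    (f : EuclideanSpace ℝ (Fin n) → ℝ)
    (hconv : Convex ℝ Θ) (hf : ConvexOn ℝ Θ f)
    (hbdd : BddBelow (f '' Θ))
    (hInt : ∀ θ ∈ Θ, ∀ t : ℝ, Integrable
      (fun z => sSup ((fun α => (inner ℝ z (α - θ) : ℝ) - f α) '' {α ∈ Θ | ‖α - θ‖ ≤ t}))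
      (stdGaussian n))
    (θ₁ θ₂ : EuclideanSpace ℝ (Fin n)) (hθ₁ : θ₁ ∈ Θ) (hθ₂ : θ₂ ∈ Θ)
    (t₁ t₂ : ℝ) (ht₁ : t₁ ∈ Set.Ici (0 : ℝ))
    (hmax₁ : IsMaxOn (fun t => mfun n Θ f θ₁ t - t ^ 2 / 2) (Set.Ici 0) t₁)
    (ht₂ : t₂ ∈ Set.Ici (0 : ℝ))
    (hmax₂ : IsMaxOn (fun t => mfun n Θ f θ₂ t - t ^ 2 / 2) (Set.Ici 0) t₂)
    (ρ : ℝ) (hρ : 0 ≤ ρ) (hd : ‖θ₁ - θ₂‖ ≤ ρ * t₁) :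
    max (1 - Real.sqrt (ρ ^ 2 + 4 * ρ)) 0 * t₁ ≤ t₂ ∧
      t₂ ≤ (1 + Real.sqrt (ρ ^ 2 + 4 * ρ)) * t₁ := by
  have hconc : ∀ θ ∈ Θ, ConcaveOn ℝ (Ici 0) (mfun n Θ f θ) := fun θ hθ =>
    concaveOn_mfun hconv hf hbdd hθ fun t _ => hInt θ hθ t
  have h12 : ∀ t ∈ Ici (0 : ℝ), mfun n Θ f θ₁ t ≤ mfun n Θ f θ₂ (t + ‖θ₁ - θ₂‖) := fun t ht =>
    mfun_le_mfun_add_norm_sub hbdd hθ₁ ht (hInt θ₁ hθ₁ t) (hInt θ₂ hθ₂ _)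
  have h21 : ∀ t ∈ Ici (0 : ℝ), mfun n Θ f θ₂ t ≤ mfun n Θ f θ₁ (t + ‖θ₁ - θ₂‖) := fun t ht =>
    norm_sub_rev θ₂ θ₁ ▸ mfun_le_mfun_add_norm_sub hbdd hθ₂ ht (hInt θ₂ hθ₂ t) (hInt θ₁ hθ₁ _)
  have hd0 := norm_nonneg (θ₁ - θ₂)
  have hup : t₂ ≤ t₁ + √(‖θ₁ - θ₂‖ ^ 2 + 4 * t₁ * ‖θ₁ - θ₂‖) :=
    le_add_sqrt_of_isMaxOn (hconc θ₁ hθ₁) ht₁ hd0 hmax₁ hmax₂ (h12 t₁ ht₁) (h21 t₂ ht₂)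
  have hlow : t₁ ≤ t₂ + √(‖θ₁ - θ₂‖ ^ 2 + 4 * t₂ * ‖θ₁ - θ₂‖) :=
    le_add_sqrt_of_isMaxOn (hconc θ₂ hθ₂) ht₂ hd0 hmax₂ hmax₁ (h21 t₂ ht₂) (h12 t₁ ht₁)
  have hs := Real.sqrt_nonneg (ρ ^ 2 + 4 * ρ)
  refine ⟨?_, by linarith [sqrt_sq_add_four_mul_le hρ hd0 ht₁ le_rfl hd]⟩
  rw [max_mul_of_nonneg _ _ ht₁, zero_mul]
  refine max_le ?_ ht₂
  rcases le_total t₁ t₂ with h | h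
  · nlinarith [mul_nonneg hs ht₁]
  · linarith [sqrt_sq_add_four_mul_le hρ hd0 ht₂ h hd]

theorem stmt10 (n : ℕ) (Θ : Set (EuclideanSpace ℝ (Fin n)))
    (f : EuclideanSpace ℝ (Fin n) → ℝ)
    (hne : Θ.Nonempty) (hcl : IsClosed Θ) (hconv : Convex ℝ Θ) (hf : ConvexOn ℝ Θ f)
    (hbdd : BddBelow (f '' Θ))
    (hInt : ∀ θ ∈ Θ, ∀ t : ℝ, Integrable
      (fun z => sSup ((fun α => (inner ℝ z (α - θ) : ℝ) - f α) '' {α ∈ Θ | ‖α - θ‖ ≤ t}))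
      (stdGaussian n))
    (θ₁ θ₂ : EuclideanSpace ℝ (Fin n)) (hθ₁ : θ₁ ∈ Θ) (hθ₂ : θ₂ ∈ Θ)
    (t₁ t₂ : ℝ) (ht₁ : t₁ ∈ Set.Ici (0 : ℝ))
    (hmax₁ : IsMaxOn (fun t => mfun n Θ f θ₁ t - t ^ 2 / 2) (Set.Ici 0) t₁)
    (ht₂ : t₂ ∈ Set.Ici (0 : ℝ))
    (hmax₂ : IsMaxOn (fun t => mfun n Θ f θ₂ t - t ^ 2 / 2) (Set.Ici 0) t₂)
    (ρ : ℝ) (hρ : 0 ≤ ρ) (hd : ‖θ₁ - θ₂‖ ≤ ρ * t₁) :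
    max (1 - Real.sqrt (ρ ^ 2 + 4 * ρ)) 0 * t₁ ≤ t₂ ∧
      t₂ ≤ (1 + Real.sqrt (ρ ^ 2 + 4 * ρ)) * t₁ :=
  stmt10_general n Θ f hconv hf hbdd hInt θ₁ θ₂ hθ₁ hθ₂ t₁ t₂ ht₁ hmax₁ ht₂ hmax₂ ρ hρ hd
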